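/- Combining the decoupling MGF bound with the kernel MGF bound: if E exp(λη) ≤ exp(l*(C₂λ)) for all λ ∈ ℝ and E exp(λU_n) ≤ (E exp(λη/k))^k with k = ⌊n/m⌋ ≥ n/(2m), then there exists a constant C₃(m) ∈ (0,∞) such that E exp(μ √n U_n) ≤ exp(n · l*(μ C₃(m)/√n)) for all μ ∈ ℝ. -/

import Mathlib

open MeasureTheory ProbabilityTheory Real Set Filter

/-- Young–Fenchel transform `l*(λ) = sup_{t ≥ 0} (|λ| t − l t)`. -/
noncomputable def youngFenchel (l : ℝ → ℝ) (lam : ℝ) : ℝ :=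
  ⨆ t : {t : ℝ // 0 ≤ t}, (|lam| * t.1 - l t.1)

/- The case split is needed because an unbounded supremum is `0` in `ℝ`. -/
lemma youngFenchel_nonneg {l : ℝ → ℝ} (hl0 : l 0 = 0) (lam : ℝ) :
    0 ≤ youngFenchel l lam := by
  unfold youngFenchel
  by_cases hb : BddAbove (Set.range fun t : {t : ℝ // 0 ≤ t} => |lam| * t.1 - l t.1)
  · simpa [hl0] using le_ciSup hb ⟨0, le_rfl⟩
  · rw [Real.iSup_of_not_bddAbove hb]

lemma integral_exp_div_pow_le {Ω : Type*} [MeasurableSpace Ω] {μ : Measure Ω} {η : Ω → ℝ}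
    {F : ℝ → ℝ} (hmgf : ∀ lam, ∫ ω, exp (lam * η ω) ∂μ ≤ exp (F lam)) (k : ℕ) (lam : ℝ) :
    (∫ ω, exp (lam * η ω / k) ∂μ) ^ k ≤ exp (k * F (lam / k)) := by
  have hscale : (fun ω => exp (lam * η ω / k)) = fun ω => exp (lam / k * η ω) := by
    funext ω; ring_nf
  rw [hscale, exp_nat_mul]
  exact pow_le_pow_left₀ (integral_nonneg fun _ => (exp_pos _).le) (hmgf _) k

lemma mul_div_sqrt_eq (n k c lam : ℝ) :
    lam * (c * n / k) / √n = c * (lam * √n / k) := by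
  calc lam * (c * n / k) / √n = lam * c / k * (n / √n) := by ring
    _ = c * (lam * √n / k) := by rw [Real.div_sqrt]; ring

theorem mgf_Ustat_combined_general
    {Ω : Type*} [MeasurableSpace Ω] (μ : Measure Ω)
    (l : ℝ → ℝ) (hl0 : l 0 = 0)
    (n m : ℕ) (hm : 0 < m) (hmn : m ≤ n)
    (Un η : Ω → ℝ)
    (C₂ : ℝ) (hC₂ : 0 < C₂)
    (hmgfη : ∀ lam : ℝ,
      (∫ ω, Real.exp (lam * η ω) ∂μ) ≤ Real.exp (youngFenchel l (C₂ * lam)))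
    (hdecouple : ∀ lam : ℝ,
      (∫ ω, Real.exp (lam * Un ω) ∂μ)
        ≤ (∫ ω, Real.exp (lam * η ω / (n / m : ℕ)) ∂μ) ^ (n / m : ℕ)) :
    ∃ C₃ : ℝ, 0 < C₃ ∧
      ∀ μ' : ℝ,
        (∫ ω, Real.exp (μ' * Real.sqrt n * Un ω) ∂μ)
          ≤ Real.exp ((n : ℝ) * youngFenchel l (μ' * C₃ / Real.sqrt n)) := by
  set k : ℕ := n / m
  have hk : (0 : ℝ) < k := by exact_mod_cast (Nat.one_le_div_iff hm).mpr hmn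
  have hkn : (k : ℝ) ≤ n := by exact_mod_cast Nat.div_le_self n m
  -- `C₃ = C₂ n / k` makes the arguments of `l*` on the two sides coincide.
  refine ⟨C₂ * n / k, by have := hk.trans_le hkn; positivity, fun μ' => ?_⟩
  rw [mul_div_sqrt_eq]
  calc (∫ ω, exp (μ' * √n * Un ω) ∂μ)
      ≤ exp (k * youngFenchel l (C₂ * (μ' * √n / k))) :=
        (hdecouple _).trans (integral_exp_div_pow_le hmgfη k _)
    _ ≤ exp (n * youngFenchel l (C₂ * (μ' * √n / k))) :=
        exp_le_exp.mpr (mul_le_mul_of_nonneg_right hkn (youngFenchel_nonneg hl0 _))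

/-- Combining the decoupling MGF bound `E exp(λ U_n) ≤ (E exp(λη/k))^k`, `k = ⌊n/m⌋ ≥ n/(2m)`,
with the kernel MGF bound `E exp(λη) ≤ exp(l*(C₂λ))` yields a constant `C₃(m) ∈ (0,∞)` with
`E exp(μ √n U_n) ≤ exp(n l*(μ C₃(m)/√n))` for all `μ ∈ ℝ`. -/
theorem mgf_Ustat_combined
    {Ω : Type*} [MeasurableSpace Ω] (μ : Measure Ω) [IsProbabilityMeasure μ]
    (l : ℝ → ℝ) (hconv : ConvexOn ℝ (Set.Ici (0 : ℝ)) l)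
    (hnonneg : ∀ t : ℝ, 0 ≤ t → 0 ≤ l t) (hl0 : l 0 = 0)
    (n m : ℕ) (hm : 0 < m) (hmn : m ≤ n)
    (hk : (n : ℝ) / (2 * m) ≤ (n / m : ℕ))
    (Un η : Ω → ℝ) (hUmeas : Measurable Un) (hηmeas : Measurable η)
    (C₂ : ℝ) (hC₂ : 0 < C₂)
    (hexpint : ∀ lam : ℝ, Integrable (fun ω => Real.exp (lam * η ω)) μ)
    (hmgfη : ∀ lam : ℝ,
      (∫ ω, Real.exp (lam * η ω) ∂μ) ≤ Real.exp (youngFenchel l (C₂ * lam)))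
    (hdecouple : ∀ lam : ℝ,
      (∫ ω, Real.exp (lam * Un ω) ∂μ)
        ≤ (∫ ω, Real.exp (lam * η ω / (n / m : ℕ)) ∂μ) ^ (n / m : ℕ)) :
    ∃ C₃ : ℝ, 0 < C₃ ∧
      ∀ μ' : ℝ,
        (∫ ω, Real.exp (μ' * Real.sqrt n * Un ω) ∂μ)
          ≤ Real.exp ((n : ℝ) * youngFenchel l (μ' * C₃ / Real.sqrt n)) :=
  mgf_Ustat_combined_general μ l hl0 n m hm hmn Un η C₂ hC₂ hmgfη hdecouple
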